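/- arXiv:2210.01522 — 2 statements merged into one kernel-verified Lean document; each statement's English description precedes it below -/
import Mathlib

section
/- If a 2-category 𝒦 admits inserters and equifiers, then 𝒦 admits lax descent objects of all coherence data. -/
open CategoryTheory Bicategory

universe w v u

variable {K : Type u} [Bicategory.{w, v} K] [Bicategory.Strict K]

/-- Coherence data in a (strict) 2-category `K`: objects `X₁, X₂, X₃`, 1-cells
`v, w : X₁ ⟶ X₂`, `i : X₂ ⟶ X₁`, `r, s, t : X₂ ⟶ X₃`, and five equalities
`iv = 1`, `1 = iw`, `rv = sv`, `tw = sw`, `rw = tv`. -/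
structure CoherenceData (K : Type u) [Bicategory.{w, v} K] [Bicategory.Strict K] where
  X₁ : K
  X₂ : K
  X₃ : K
  v : X₁ ⟶ X₂
  w : X₁ ⟶ X₂
  i : X₂ ⟶ X₁
  r : X₂ ⟶ X₃
  s : X₂ ⟶ X₃
  t : X₂ ⟶ X₃
  hiv : v ≫ i = 𝟙 X₁
  hiw : 𝟙 X₁ = w ≫ i
  hrv : v ≫ r = v ≫ s
  htw : w ≫ t = w ≫ s
  hrw : w ≫ r = v ≫ t

/-- A cone `(Y, y, η)` over coherence data: `η : vy ⟶ wy` satisfies the unit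
equation and the cocycle equation. -/
def DescentCompatible (D : CoherenceData K) (Y : K) (y : Y ⟶ D.X₁)
    (η : y ≫ D.v ⟶ y ≫ D.w) : Prop :=
  (eqToHom (by rw [Bicategory.Strict.assoc, D.hiv, Bicategory.Strict.comp_id]) ≫
      (η ▷ D.i) ≫
      eqToHom (by rw [Bicategory.Strict.assoc, ← D.hiw, Bicategory.Strict.comp_id]) = 𝟙 y)
  ∧
  ((η ▷ D.r) ≫
      eqToHom (by rw [Bicategory.Strict.assoc, Bicategory.Strict.assoc, D.hrw]) ≫
      (η ▷ D.t) =
    eqToHom (by rw [Bicategory.Strict.assoc, Bicategory.Strict.assoc, D.hrv]) ≫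
      (η ▷ D.s) ≫
      eqToHom (by rw [Bicategory.Strict.assoc, Bicategory.Strict.assoc, D.htw]))

/-- `(X, x, ξ)` is a lax descent object of the coherence data `D`:
it is descent-compatible and universal among such triples, both 1- and
2-dimensionally. -/
def IsLaxDescentObject (D : CoherenceData K) (X : K) (x : X ⟶ D.X₁)
    (ξ : x ≫ D.v ⟶ x ≫ D.w) : Prop :=
  DescentCompatible D X x ξ ∧
  (∀ (Y : K) (y : Y ⟶ D.X₁) (η : y ≫ D.v ⟶ y ≫ D.w),
    DescentCompatible D Y y η →
      ∃! u : Y ⟶ X, ∃ h : u ≫ x = y,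
        u ◁ ξ = eqToHom (by rw [← Bicategory.Strict.assoc, h]) ≫ η ≫
          eqToHom (by rw [← Bicategory.Strict.assoc, h])) ∧
  (∀ (Y : K) (u u' : Y ⟶ X) (α : u ≫ x ⟶ u' ≫ x),
    eqToHom (Bicategory.Strict.assoc u x D.v).symm ≫ (α ▷ D.v) ≫
        eqToHom (Bicategory.Strict.assoc u' x D.v) ≫ (u' ◁ ξ) =
      (u ◁ ξ) ≫ eqToHom (Bicategory.Strict.assoc u x D.w).symm ≫ (α ▷ D.w) ≫
        eqToHom (Bicategory.Strict.assoc u' x D.w) →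
      ∃! β : u ⟶ u', α = β ▷ x)

/-- `(I, p, ζ)` is an inserter of the parallel pair `v, w : a ⟶ b`. -/
def IsInserter {a b : K} (v w : a ⟶ b) (I : K) (p : I ⟶ a)
    (ζ : p ≫ v ⟶ p ≫ w) : Prop :=
  (∀ (Y : K) (q : Y ⟶ a) (η : q ≫ v ⟶ q ≫ w),
    ∃! u : Y ⟶ I, ∃ h : u ≫ p = q,
      u ◁ ζ = eqToHom (by rw [← Bicategory.Strict.assoc, h]) ≫ η ≫
        eqToHom (by rw [← Bicategory.Strict.assoc, h])) ∧
  (∀ (Y : K) (u u' : Y ⟶ I) (α : u ≫ p ⟶ u' ≫ p),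
    eqToHom (Bicategory.Strict.assoc u p v).symm ≫ (α ▷ v) ≫
        eqToHom (Bicategory.Strict.assoc u' p v) ≫ (u' ◁ ζ) =
      (u ◁ ζ) ≫ eqToHom (Bicategory.Strict.assoc u p w).symm ≫ (α ▷ w) ≫
        eqToHom (Bicategory.Strict.assoc u' p w) →
      ∃! β : u ⟶ u', α = β ▷ p)

/-- `(E, e)` is an equifier of a parallel pair of 2-cells `φ ψ : f ⟶ g : a ⟶ b`. -/
def IsEquifier {a b : K} {f g : a ⟶ b} (φ ψ : f ⟶ g) (E : K) (e : E ⟶ a) : Prop :=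
  (e ◁ φ = e ◁ ψ) ∧
  (∀ (Y : K) (q : Y ⟶ a), q ◁ φ = q ◁ ψ → ∃! u : Y ⟶ E, u ≫ e = q) ∧
  (∀ (Y : K) (u u' : Y ⟶ E) (γ : u ≫ e ⟶ u' ≫ e), ∃! δ : u ⟶ u', γ = δ ▷ e)

/-- `K` admits inserters. -/
def HasInserters (K : Type u) [Bicategory.{w, v} K] [Bicategory.Strict K] : Prop :=
  ∀ {a b : K} (v w : a ⟶ b), ∃ (I : K) (p : I ⟶ a) (ζ : p ≫ v ⟶ p ≫ w),
    IsInserter v w I p ζ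

/-- `K` admits equifiers. -/
def HasEquifiers (K : Type u) [Bicategory.{w, v} K] [Bicategory.Strict K] : Prop :=
  ∀ {a b : K} {f g : a ⟶ b} (φ ψ : f ⟶ g), ∃ (E : K) (e : E ⟶ a),
    IsEquifier φ ψ E e

attribute [local simp] Bicategory.Strict.associator_eqToIso
  Bicategory.Strict.leftUnitor_eqToIso Bicategory.Strict.rightUnitor_eqToIso

/-- If a 2-category `K` admits inserters and equifiers, then it admits lax descent
objects of all coherence data. -/
theorem hasLaxDescentObjects_of_hasInserters_of_hasEquifiers
    (hIns : HasInserters K) (hEq : HasEquifiers K) (D : CoherenceData K) :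
    ∃ (X : K) (x : X ⟶ D.X₁) (ξ : x ≫ D.v ⟶ x ≫ D.w),
      IsLaxDescentObject D X x ξ := by
  obtain ⟨I, p, ζ, hins⟩ := hIns D.v D.w
  obtain ⟨hI1, hI2⟩ := hins
  have h₁ : p = (p ≫ D.v) ≫ D.i := by
    rw [Bicategory.Strict.assoc, D.hiv, Bicategory.Strict.comp_id]
  have h₂ : (p ≫ D.w) ≫ D.i = p := by
    rw [Bicategory.Strict.assoc, ← D.hiw, Bicategory.Strict.comp_id]
  obtain ⟨E₁, e₁, hE₁0, hE₁1, hE₁2⟩ := hEq (eqToHom h₁ ≫ (ζ ▷ D.i) ≫ eqToHom h₂) (𝟙 p)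
  have c₁ : ((e₁ ≫ p) ≫ D.w) ≫ D.r = ((e₁ ≫ p) ≫ D.v) ≫ D.t := by simp [D.hrw]
  have c₂ : ((e₁ ≫ p) ≫ D.v) ≫ D.r = ((e₁ ≫ p) ≫ D.v) ≫ D.s := by simp [D.hrv]
  have c₃ : ((e₁ ≫ p) ≫ D.w) ≫ D.s = ((e₁ ≫ p) ≫ D.w) ≫ D.t := by simp [D.htw]
  obtain ⟨E₂, e₂, hE₂0, hE₂1, hE₂2⟩ :=
    hEq (((eqToHom (Bicategory.Strict.assoc e₁ p D.v) ≫ e₁ ◁ ζ ≫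
            eqToHom (Bicategory.Strict.assoc e₁ p D.w).symm) ▷ D.r) ≫
          eqToHom c₁ ≫
          ((eqToHom (Bicategory.Strict.assoc e₁ p D.v) ≫ e₁ ◁ ζ ≫
            eqToHom (Bicategory.Strict.assoc e₁ p D.w).symm) ▷ D.t))
        (eqToHom c₂ ≫
          ((eqToHom (Bicategory.Strict.assoc e₁ p D.v) ≫ e₁ ◁ ζ ≫
            eqToHom (Bicategory.Strict.assoc e₁ p D.w).symm) ▷ D.s) ≫ eqToHom c₃)
  refine ⟨E₂, e₂ ≫ e₁ ≫ p,
    eqToHom (by simp : (e₂ ≫ e₁ ≫ p) ≫ D.v = e₂ ≫ ((e₁ ≫ p) ≫ D.v)) ≫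
      e₂ ◁ (eqToHom (Bicategory.Strict.assoc e₁ p D.v) ≫ e₁ ◁ ζ ≫
        eqToHom (Bicategory.Strict.assoc e₁ p D.w).symm) ≫
      eqToHom (by simp : e₂ ≫ ((e₁ ≫ p) ≫ D.w) = (e₂ ≫ e₁ ≫ p) ≫ D.w), ?_⟩
  unfold IsLaxDescentObject DescentCompatible
  refine ⟨⟨?_, ?_⟩, ?_, ?_⟩
  · simp at hE₁0
    rw [eqToHom_comp_iff, comp_eqToHom_iff] at hE₁0
    simp [hE₁0]
  · simp at hE₂0
    rw [eq_comm, eqToHom_comp_iff, comp_eqToHom_iff] at hE₂0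
    simp at hE₂0
    simp [hE₂0]
  · intro Y y η Hη
    obtain ⟨Hη1, Hη2⟩ := Hη
    obtain ⟨u₀, ⟨h₀, k₀⟩, un₀⟩ := hI1 Y y η
    subst h₀
    -- unit fact for η
    rw [eqToHom_comp_iff, comp_eqToHom_iff] at Hη1
    simp at Hη1
    -- cocycle fact for η : solve for η ▷ s
    rw [eq_comm, eqToHom_comp_iff, comp_eqToHom_iff] at Hη2
    simp at Hη2
    -- whisker k₀ by i
    have k₁ := congrArg (fun θ => θ ▷ D.i) k₀
    simp at k₁
    rw [eqToHom_comp_iff, comp_eqToHom_iff] at k₁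
    simp at k₁
    obtain ⟨u₁, h₁', un₁⟩ := hE₁1 Y u₀ (by simp [k₁, Hη1])
    subst h₁'
    have kr := congrArg (fun θ => θ ▷ D.r) k₀
    have ks := congrArg (fun θ => θ ▷ D.s) k₀
    have kt := congrArg (fun θ => θ ▷ D.t) k₀
    simp at kr ks kt
    rw [eqToHom_comp_iff, comp_eqToHom_iff] at kr ks kt
    simp at kr ks kt
    obtain ⟨u₂, h₂', un₂⟩ := hE₂1 Y u₁ (by simp [kr, ks, kt, Hη2])
    subst h₂'
    simp at k₀
    rw [eqToHom_comp_iff, comp_eqToHom_iff] at k₀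
    simp at k₀
    refine ⟨u₂, ⟨by simp, ?_⟩, ?_⟩
    · simp [k₀]
    · rintro u' ⟨h', k'⟩
      simp at k'
      rw [eqToHom_comp_iff, comp_eqToHom_iff] at k'
      simp at k'
      have hz : ((u' ≫ e₂) ≫ e₁) ≫ p = ((u₂ ≫ e₂) ≫ e₁) ≫ p := by simpa using h'
      have e₀ : (u' ≫ e₂) ≫ e₁ = (u₂ ≫ e₂) ≫ e₁ :=
        un₀ ((u' ≫ e₂) ≫ e₁) ⟨hz, by simp [k']⟩
      exact un₂ u' (un₁ (u' ≫ e₂) e₀)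
  · intro Y u u' α hα
    obtain ⟨β₀, hβ₀, unβ₀⟩ := hI2 Y ((u ≫ e₂) ≫ e₁) ((u' ≫ e₂) ≫ e₁)
      (eqToHom (show ((u ≫ e₂) ≫ e₁) ≫ p = u ≫ e₂ ≫ e₁ ≫ p by simp) ≫ α ≫
        eqToHom (show u' ≫ e₂ ≫ e₁ ≫ p = ((u' ≫ e₂) ≫ e₁) ≫ p by simp))
      (by
        have cond := congrArg (fun θ =>
          eqToHom (show ((u ≫ e₂) ≫ e₁) ≫ p ≫ D.v = u ≫ (e₂ ≫ e₁ ≫ p) ≫ D.v by simp) ≫ θ ≫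
          eqToHom (show u' ≫ (e₂ ≫ e₁ ≫ p) ≫ D.w = ((u' ≫ e₂) ≫ e₁) ≫ p ≫ D.w by simp)) hα
        simpa using cond)
    obtain ⟨δ, hδ, unδ⟩ := hE₁2 Y (u ≫ e₂) (u' ≫ e₂) β₀
    obtain ⟨β, hβ, unβ⟩ := hE₂2 Y u u' δ
    subst hδ
    subst hβ
    rw [eqToHom_comp_iff, comp_eqToHom_iff] at hβ₀
    refine ⟨β, ?_, ?_⟩
    · rw [hβ₀]; simp
    · intro β' hβ'
      have h1 : eqToHom (show ((u ≫ e₂) ≫ e₁) ≫ p = u ≫ e₂ ≫ e₁ ≫ p by simp) ≫ α ≫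
          eqToHom (show u' ≫ e₂ ≫ e₁ ≫ p = ((u' ≫ e₂) ≫ e₁) ≫ p by simp) =
          ((β' ▷ e₂) ▷ e₁) ▷ p := by
        rw [hβ']; simp
      have h2 := unβ₀ ((β' ▷ e₂) ▷ e₁) h1
      exact unβ β' (unδ (β' ▷ e₂) h2.symm).symm
end

section
/- The 1-dimensional universal property of an inserter and equifier construction yields the lax descent universal property: if (I, a, ζ) is the inserter of v, w : X₁ → X₂ and X ↪ I is the joint equifier of the two pairs of 2-cells expressing the unit equation and the cocycle equation of coherence data, then (X, a|_X, ζ|_X) is a lax descent object of that coherence data. -/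
open CategoryTheory Bicategory

universe w v u

variable {K : Type u} [Bicategory.{w, v} K] [Bicategory.Strict K]


@[simp] lemma whisker_assoc' {a b c d : K} (f : a ⟶ b) {g g' : b ⟶ c} (η : g ⟶ g') (h : c ⟶ d) :
    (f ◁ η) ▷ h = eqToHom (Bicategory.Strict.assoc f g h) ≫ f ◁ (η ▷ h) ≫
      eqToHom (Bicategory.Strict.assoc f g' h).symm := by
  rw [whisker_assoc]; simp [Bicategory.Strict.associator_eqToIso]

@[simp] lemma comp_whiskerLeft' {a b c d : K} (f : a ⟶ b) (g : b ⟶ c) {h h' : c ⟶ d} (η : h ⟶ h') :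
    (f ≫ g) ◁ η = eqToHom (Bicategory.Strict.assoc f g h) ≫ f ◁ (g ◁ η) ≫
      eqToHom (Bicategory.Strict.assoc f g h').symm := by
  rw [comp_whiskerLeft]; simp [Bicategory.Strict.associator_eqToIso]

@[simp] lemma whiskerRight_comp' {a b c d : K} {f f' : a ⟶ b} (η : f ⟶ f') (g : b ⟶ c) (h : c ⟶ d) :
    η ▷ (g ≫ h) = eqToHom (Bicategory.Strict.assoc f g h).symm ≫ ((η ▷ g) ▷ h) ≫
      eqToHom (Bicategory.Strict.assoc f' g h) := by
  rw [Bicategory.whiskerRight_comp]; simp [Bicategory.Strict.associator_eqToIso]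

/-- `(E, e)` is a joint equifier of two parallel pairs of 2-cells. -/
def IsBiEquifier {a b c : K} {f g : a ⟶ b} (φ ψ : f ⟶ g)
    {f' g' : a ⟶ c} (φ' ψ' : f' ⟶ g') (E : K) (e : E ⟶ a) : Prop :=
  (e ◁ φ = e ◁ ψ) ∧ (e ◁ φ' = e ◁ ψ') ∧
  (∀ (Y : K) (q : Y ⟶ a), q ◁ φ = q ◁ ψ → q ◁ φ' = q ◁ ψ' →
    ∃! u : Y ⟶ E, u ≫ e = q) ∧
  (∀ (Y : K) (u u' : Y ⟶ E) (γ : u ≫ e ⟶ u' ≫ e), ∃! δ : u ⟶ u', γ = δ ▷ e)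

/-- An inserter followed by a joint equifier of the unit-equation pair and the
cocycle-equation pair of 2-cells yields a lax descent object of the coherence
data. -/
theorem isLaxDescentObject_of_inserter_equifier (D : CoherenceData K)
    (I : K) (a : I ⟶ D.X₁) (ζ : a ≫ D.v ⟶ a ≫ D.w)
    (hI : IsInserter D.v D.w I a ζ)
    (X : K) (e : X ⟶ I)
    (hX : IsBiEquifier
      -- the unit-equation pair of 2-cells `a ⟶ a`
      (eqToHom (by rw [Bicategory.Strict.assoc, D.hiv, Bicategory.Strict.comp_id]) ≫
        (ζ ▷ D.i) ≫
        eqToHom (by rw [Bicategory.Strict.assoc, ← D.hiw, Bicategory.Strict.comp_id]))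
      (𝟙 a)
      -- the cocycle-equation pair of 2-cells `(a ≫ v) ≫ r ⟶ (a ≫ w) ≫ t`
      ((ζ ▷ D.r) ≫
        eqToHom (by rw [Bicategory.Strict.assoc, Bicategory.Strict.assoc, D.hrw]) ≫
        (ζ ▷ D.t))
      (eqToHom (by rw [Bicategory.Strict.assoc, Bicategory.Strict.assoc, D.hrv]) ≫
        (ζ ▷ D.s) ≫
        eqToHom (by rw [Bicategory.Strict.assoc, Bicategory.Strict.assoc, D.htw]))
      X e) :
    IsLaxDescentObject D X (e ≫ a)
      (eqToHom (Bicategory.Strict.assoc e a D.v) ≫ (e ◁ ζ) ≫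
        eqToHom (Bicategory.Strict.assoc e a D.w).symm) := by

  obtain ⟨hI1, hI2⟩ := hI
  obtain ⟨hXu, hXc, hX1, hX2⟩ := hX
  refine ⟨⟨?_, ?_⟩, ?_, ?_⟩
  · simp [Bicategory.Strict.associator_eqToIso] at hXu ⊢
    exact hXu
  · simp [Bicategory.Strict.associator_eqToIso, eqToHom_comp_iff, comp_eqToHom_iff] at hXc ⊢
    have h2 := congrArg (fun γ => γ ≫ eqToHom (show e ≫ ((a ≫ D.w) ≫ D.t) = ((e ≫ a) ≫ D.w) ≫ D.t by simp)) hXc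
    simpa using h2
  · intro Y y η hd
    obtain ⟨hunit, hcoc⟩ := hd
    obtain ⟨u, ⟨hu, hζ⟩, huniq⟩ := hI1 Y y η
    subst hu
    have ηeq : η = eqToHom (Bicategory.Strict.assoc u a D.v) ≫ (u ◁ ζ) ≫
        eqToHom (Bicategory.Strict.assoc u a D.w).symm := by
      rw [hζ]; simp
    subst ηeq
    obtain ⟨m, hm, hm'⟩ := hX1 Y u
      (by simpa [Bicategory.Strict.associator_eqToIso] using hunit)
      (by
        have h3 := congrArg (fun γ =>
          eqToHom (show u ≫ ((a ≫ D.v) ≫ D.r) = ((u ≫ a) ≫ D.v) ≫ D.r by simp) ≫ γ ≫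
          eqToHom (show ((u ≫ a) ≫ D.w) ≫ D.t = u ≫ ((a ≫ D.w) ≫ D.t) by simp)) hcoc
        simpa [Bicategory.Strict.associator_eqToIso] using h3)
    · subst hm
      refine ⟨m, ⟨by simp, by simp [Bicategory.Strict.associator_eqToIso]⟩, ?_⟩
      intro m' hm'2
      obtain ⟨h', hw'⟩ := hm'2
      apply hm'
      refine huniq (m' ≫ e) ⟨by simpa using h', ?_⟩
      have h3 := congrArg (fun γ =>
        eqToHom (show (m' ≫ e) ≫ (a ≫ D.v) = m' ≫ ((e ≫ a) ≫ D.v) by simp) ≫ γ ≫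
        eqToHom (show m' ≫ ((e ≫ a) ≫ D.w) = (m' ≫ e) ≫ (a ≫ D.w) by simp)) hw'
      simpa [Bicategory.Strict.associator_eqToIso] using h3
  · intro Y u u' α hα
    set α' : (u ≫ e) ≫ a ⟶ (u' ≫ e) ≫ a :=
      eqToHom (show (u ≫ e) ≫ a = u ≫ (e ≫ a) by simp) ≫ α ≫
        eqToHom (show u' ≫ (e ≫ a) = (u' ≫ e) ≫ a by simp) with hα'def
    obtain ⟨β₀, hβ₀, hβ₀u⟩ := hI2 Y (u ≫ e) (u' ≫ e) α'
      (by
        have h3 := congrArg (fun γ =>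
          eqToHom (show (u ≫ e) ≫ (a ≫ D.v) = u ≫ ((e ≫ a) ≫ D.v) by simp) ≫ γ ≫
          eqToHom (show u' ≫ ((e ≫ a) ≫ D.w) = (u' ≫ e) ≫ (a ≫ D.w) by simp)) hα
        simpa [hα'def, Bicategory.Strict.associator_eqToIso] using h3)
    · obtain ⟨β, hβ, hβu⟩ := hX2 Y u u' β₀
      refine ⟨β, ?_, ?_⟩
      · show α = β ▷ (e ≫ a)
        have h4 : α = eqToHom (show u ≫ (e ≫ a) = (u ≫ e) ≫ a by simp) ≫ α' ≫
            eqToHom (show (u' ≫ e) ≫ a = u' ≫ (e ≫ a) by simp) := by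
          rw [hα'def]; simp
        rw [h4, hβ₀, hβ]
        simp [Bicategory.Strict.associator_eqToIso]
      · intro β' hβ'
        have h5 : α' = (β' ▷ e) ▷ a := by
          rw [hα'def, hβ']; simp [Bicategory.Strict.associator_eqToIso]
        exact hβu β' (hβ₀u (β' ▷ e) h5).symm
end
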